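/- Let k ∈ ℝ with n = 2|k| ∈ ℕ. Define v(t,r) = (1/(2π))·(cosh²(t/2) − cosh²(r/2))^{-1/2}·T_n(cosh(t/2)/cosh(r/2)) on the region D = {(t,r) : 0 < r < t}, where T_n is the n-th Chebyshev polynomial of the first kind. Then on D the function v satisfies the radial wave equation ∂²v/∂t² = ∂²v/∂r² + coth(r)·∂v/∂r + (k²/cosh²(r/2))·v + (1/4)·v. -/

import Mathlib

open Polynomial Real

/-- evaluated Chebyshev ODE at cos θ -/
lemma cheb_ode_cos (n : ℤ) (θ : ℝ) :
    (1 - Real.cos θ ^ 2) * ((Polynomial.Chebyshev.T ℝ n).derivative.derivative.eval (Real.cos θ))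
      - Real.cos θ * ((Polynomial.Chebyshev.T ℝ n).derivative.eval (Real.cos θ))
      + (n : ℝ) ^ 2 * (Polynomial.Chebyshev.T ℝ n).eval (Real.cos θ) = 0 := by
  set P := Polynomial.Chebyshev.T ℝ n with hPdef
  have hfun : (fun θ : ℝ => P.eval (Real.cos θ)) = (fun θ : ℝ => Real.cos ((n : ℝ) * θ)) :=
    funext fun θ => Polynomial.Chebyshev.T_real_cos θ n
  -- first derivative identity
  have e1 : ∀ ψ : ℝ, P.derivative.eval (Real.cos ψ) * (-Real.sin ψ)
      = -Real.sin ((n : ℝ) * ψ) * (n : ℝ) := by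
    intro ψ
    have h1 : HasDerivAt (fun θ : ℝ => P.eval (Real.cos θ))
        (P.derivative.eval (Real.cos ψ) * (-Real.sin ψ)) ψ :=
      (P.hasDerivAt (Real.cos ψ)).comp ψ (Real.hasDerivAt_cos ψ)
    have h2 : HasDerivAt (fun θ : ℝ => Real.cos ((n : ℝ) * θ))
        (-Real.sin ((n : ℝ) * ψ) * (n : ℝ)) ψ :=
      (Real.hasDerivAt_cos ((n : ℝ) * ψ)).comp ψ
        (by simpa using (hasDerivAt_id ψ).const_mul (n : ℝ))
    have := h1.deriv
    rw [hfun, h2.deriv] at this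
    exact this.symm
  -- second derivative identity
  have h1 : HasDerivAt (fun ψ : ℝ => P.derivative.eval (Real.cos ψ) * (-Real.sin ψ))
      ((P.derivative.derivative.eval (Real.cos θ) * (-Real.sin θ)) * (-Real.sin θ)
        + P.derivative.eval (Real.cos θ) * (-Real.cos θ)) θ :=
    ((P.derivative.hasDerivAt (Real.cos θ)).comp θ (Real.hasDerivAt_cos θ)).mul
      (Real.hasDerivAt_sin θ).neg
  have h2 : HasDerivAt (fun ψ : ℝ => -Real.sin ((n : ℝ) * ψ) * (n : ℝ))
      ((-(Real.cos ((n : ℝ) * θ) * (n : ℝ))) * (n : ℝ)) θ :=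
    (((Real.hasDerivAt_sin ((n : ℝ) * θ)).comp θ
      (by simpa using (hasDerivAt_id θ).const_mul (n : ℝ))).neg).mul_const (n : ℝ)
  have key := h1.deriv
  rw [funext e1, h2.deriv] at key
  have hc : Real.cos ((n : ℝ) * θ) = P.eval (Real.cos θ) :=
    (Polynomial.Chebyshev.T_real_cos θ n).symm
  have hsin : Real.sin θ ^ 2 = 1 - Real.cos θ ^ 2 := Real.sin_sq θ
  rw [hc] at key
  linear_combination (-1 : ℝ) * key - (P.derivative.derivative.eval (Real.cos θ)) * hsin

lemma cheb_ode (n : ℤ) (y : ℝ) :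
    (1 - y ^ 2) * ((Polynomial.Chebyshev.T ℝ n).derivative.derivative.eval y)
      - y * ((Polynomial.Chebyshev.T ℝ n).derivative.eval y)
      + (n : ℝ) ^ 2 * (Polynomial.Chebyshev.T ℝ n).eval y = 0 := by
  set P := Polynomial.Chebyshev.T ℝ n with hPdef
  have hpoly : (1 - Polynomial.X ^ 2) * P.derivative.derivative
      - Polynomial.X * P.derivative + Polynomial.C ((n : ℝ) ^ 2) * P = 0 := by
    apply Polynomial.eq_of_infinite_eval_eq
    apply Set.Infinite.mono (s := Set.Icc (-1 : ℝ) 1)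
    · intro x hx
      obtain ⟨hx1, hx2⟩ := hx
      have : x = Real.cos (Real.arccos x) := (Real.cos_arccos hx1 hx2).symm
      simp only [Set.mem_setOf_eq, Polynomial.eval_add, Polynomial.eval_sub,
        Polynomial.eval_mul, Polynomial.eval_pow, Polynomial.eval_X, Polynomial.eval_C,
        Polynomial.eval_one, Polynomial.eval_zero]
      rw [this]
      exact cheb_ode_cos n (Real.arccos x)
    · exact Set.Icc_infinite (show (-1:ℝ) < 1 by norm_num)
  have := congrArg (Polynomial.eval y) hpoly
  simpa using this


noncomputable def gT (b : ℝ) (P : Polynomial ℝ) (t : ℝ) : ℝ :=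
  (Real.cosh (t/2) ^ 2 - b ^ 2) ^ (-(1/2) : ℝ) * P.eval (Real.cosh (t/2) / b)

noncomputable def gT' (b : ℝ) (P : Polynomial ℝ) (t : ℝ) : ℝ :=
  -(1/2) * (Real.cosh (t/2) ^ 2 - b ^ 2) ^ (-(3/2) : ℝ)
      * (Real.cosh (t/2) * Real.sinh (t/2)) * P.eval (Real.cosh (t/2) / b)
    + (Real.cosh (t/2) ^ 2 - b ^ 2) ^ (-(1/2) : ℝ) * P.derivative.eval (Real.cosh (t/2) / b)
      * (Real.sinh (t/2) / (2 * b))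

lemma hasDerivAt_half (t : ℝ) : HasDerivAt (fun x : ℝ => x / 2) (1/2 : ℝ) t := by
  simpa using (hasDerivAt_id t).div_const 2

lemma hasDerivAt_coshHalf (t : ℝ) :
    HasDerivAt (fun x : ℝ => Real.cosh (x/2)) (Real.sinh (t/2) * (1/2)) t :=
  by have h := (Real.hasDerivAt_cosh (t/2)).comp t (hasDerivAt_half t); exact h

lemma hasDerivAt_sinhHalf (t : ℝ) :
    HasDerivAt (fun x : ℝ => Real.sinh (x/2)) (Real.cosh (t/2) * (1/2)) t :=
  by have h := (Real.hasDerivAt_sinh (t/2)).comp t (hasDerivAt_half t); exact h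

lemma hasDerivAt_wT (b t : ℝ) :
    HasDerivAt (fun x : ℝ => Real.cosh (x/2) ^ 2 - b ^ 2)
      (Real.cosh (t/2) * Real.sinh (t/2)) t := by
  have h := ((hasDerivAt_coshHalf t).pow 2).sub_const (b ^ 2)
  refine h.congr_deriv ?_
  ring

lemma hasDerivAt_gT (b : ℝ) (hb : 0 < b) (P : Polynomial ℝ) {t : ℝ}
    (h : b < Real.cosh (t/2)) :
    HasDerivAt (gT b P) (gT' b P t) t := by
  have hw : (0:ℝ) < Real.cosh (t/2) ^ 2 - b ^ 2 := by nlinarith [Real.cosh_pos (t/2)]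
  have h1 : HasDerivAt (fun x : ℝ => (Real.cosh (x/2) ^ 2 - b ^ 2) ^ (-(1/2) : ℝ))
      (Real.cosh (t/2) * Real.sinh (t/2) * (-(1/2))
        * (Real.cosh (t/2) ^ 2 - b ^ 2) ^ (-(1/2) - 1 : ℝ)) t :=
    (hasDerivAt_wT b t).rpow_const (Or.inl hw.ne')
  have h2 : HasDerivAt (fun x : ℝ => P.eval (Real.cosh (x/2) / b))
      (P.derivative.eval (Real.cosh (t/2) / b) * (Real.sinh (t/2) * (1/2) / b)) t :=
    (P.hasDerivAt _).comp t ((hasDerivAt_coshHalf t).div_const b)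
  have := h1.mul h2
  refine this.congr_deriv ?_
  rw [show (-(1/2) - 1 : ℝ) = -(3/2) by norm_num]
  unfold gT'
  ring

noncomputable def gTT (b : ℝ) (P : Polynomial ℝ) (t : ℝ) : ℝ :=
  (3/4) * (Real.cosh (t/2) ^ 2 - b ^ 2) ^ (-(5/2) : ℝ)
      * (Real.cosh (t/2) ^ 2 * (Real.cosh (t/2) ^ 2 - 1)) * P.eval (Real.cosh (t/2) / b)
  - (1/4) * (Real.cosh (t/2) ^ 2 - b ^ 2) ^ (-(3/2) : ℝ)
      * (Real.cosh (t/2) ^ 2 + (Real.cosh (t/2) ^ 2 - 1)) * P.eval (Real.cosh (t/2) / b)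
  - (1/2) * (Real.cosh (t/2) ^ 2 - b ^ 2) ^ (-(3/2) : ℝ)
      * (Real.cosh (t/2) * (Real.cosh (t/2) ^ 2 - 1))
      * P.derivative.eval (Real.cosh (t/2) / b) / b
  + (Real.cosh (t/2) ^ 2 - b ^ 2) ^ (-(1/2) : ℝ)
      * (P.derivative.derivative.eval (Real.cosh (t/2) / b) * (Real.cosh (t/2) ^ 2 - 1) / (4 * b ^ 2)
        + P.derivative.eval (Real.cosh (t/2) / b) * Real.cosh (t/2) / (4 * b))

lemma hasDerivAt_gT' (b : ℝ) (hb : 0 < b) (P : Polynomial ℝ) {t : ℝ}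
    (h : b < Real.cosh (t/2)) :
    HasDerivAt (gT' b P) (gTT b P t) t := by
  have hw : (0:ℝ) < Real.cosh (t/2) ^ 2 - b ^ 2 := by nlinarith [Real.cosh_pos (t/2)]
  -- pieces
  have hW3 : HasDerivAt (fun x : ℝ => (Real.cosh (x/2) ^ 2 - b ^ 2) ^ (-(3/2) : ℝ))
      (Real.cosh (t/2) * Real.sinh (t/2) * (-(3/2))
        * (Real.cosh (t/2) ^ 2 - b ^ 2) ^ (-(3/2) - 1 : ℝ)) t :=
    (hasDerivAt_wT b t).rpow_const (Or.inl hw.ne')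
  have hW1 : HasDerivAt (fun x : ℝ => (Real.cosh (x/2) ^ 2 - b ^ 2) ^ (-(1/2) : ℝ))
      (Real.cosh (t/2) * Real.sinh (t/2) * (-(1/2))
        * (Real.cosh (t/2) ^ 2 - b ^ 2) ^ (-(1/2) - 1 : ℝ)) t :=
    (hasDerivAt_wT b t).rpow_const (Or.inl hw.ne')
  have hcs : HasDerivAt (fun x : ℝ => Real.cosh (x/2) * Real.sinh (x/2))
      (Real.sinh (t/2) * (1/2) * Real.sinh (t/2)
        + Real.cosh (t/2) * (Real.cosh (t/2) * (1/2))) t :=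
    (hasDerivAt_coshHalf t).mul (hasDerivAt_sinhHalf t)
  have hP0 : HasDerivAt (fun x : ℝ => P.eval (Real.cosh (x/2) / b))
      (P.derivative.eval (Real.cosh (t/2) / b) * (Real.sinh (t/2) * (1/2) / b)) t :=
    (P.hasDerivAt _).comp t ((hasDerivAt_coshHalf t).div_const b)
  have hP1 : HasDerivAt (fun x : ℝ => P.derivative.eval (Real.cosh (x/2) / b))
      (P.derivative.derivative.eval (Real.cosh (t/2) / b) * (Real.sinh (t/2) * (1/2) / b)) t :=
    (P.derivative.hasDerivAt _).comp t ((hasDerivAt_coshHalf t).div_const b)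
  have hsd : HasDerivAt (fun x : ℝ => Real.sinh (x/2) / (2 * b))
      (Real.cosh (t/2) * (1/2) / (2 * b)) t :=
    (hasDerivAt_sinhHalf t).div_const (2 * b)
  have hmain :=
    ((((hW3.const_mul (-(1/2) : ℝ)).mul hcs).mul hP0).add
      ((hW1.mul hP1).mul hsd))
  refine hmain.congr_deriv ?_
  simp only [Pi.mul_apply]
  rw [show (-(3/2) - 1 : ℝ) = -(5/2) by norm_num,
    show (-(1/2) - 1 : ℝ) = -(3/2) by norm_num]
  unfold gTT
  rw [← Real.sinh_sq (t/2)]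
  ring


noncomputable def gR (a : ℝ) (P : Polynomial ℝ) (r : ℝ) : ℝ :=
  (a ^ 2 - Real.cosh (r/2) ^ 2) ^ (-(1/2) : ℝ) * P.eval (a / Real.cosh (r/2))

noncomputable def gR' (a : ℝ) (P : Polynomial ℝ) (r : ℝ) : ℝ :=
  (1/2) * (a ^ 2 - Real.cosh (r/2) ^ 2) ^ (-(3/2) : ℝ)
      * (Real.cosh (r/2) * Real.sinh (r/2)) * P.eval (a / Real.cosh (r/2))
    - (a ^ 2 - Real.cosh (r/2) ^ 2) ^ (-(1/2) : ℝ) * P.derivative.eval (a / Real.cosh (r/2))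
      * (a * Real.sinh (r/2) / (2 * Real.cosh (r/2) ^ 2))

noncomputable def gRR (a : ℝ) (P : Polynomial ℝ) (r : ℝ) : ℝ :=
  (3/4) * (a ^ 2 - Real.cosh (r/2) ^ 2) ^ (-(5/2) : ℝ)
      * (Real.cosh (r/2) ^ 2 * (Real.cosh (r/2) ^ 2 - 1)) * P.eval (a / Real.cosh (r/2))
  + (1/4) * (a ^ 2 - Real.cosh (r/2) ^ 2) ^ (-(3/2) : ℝ)
      * (Real.cosh (r/2) ^ 2 + (Real.cosh (r/2) ^ 2 - 1)) * P.eval (a / Real.cosh (r/2))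
  - (1/2) * (a ^ 2 - Real.cosh (r/2) ^ 2) ^ (-(3/2) : ℝ)
      * (a * (Real.cosh (r/2) ^ 2 - 1)) * P.derivative.eval (a / Real.cosh (r/2))
      / Real.cosh (r/2)
  + (a ^ 2 - Real.cosh (r/2) ^ 2) ^ (-(1/2) : ℝ)
      * (P.derivative.derivative.eval (a / Real.cosh (r/2))
            * (a ^ 2 * (Real.cosh (r/2) ^ 2 - 1)) / (4 * Real.cosh (r/2) ^ 4)
        - P.derivative.eval (a / Real.cosh (r/2))
            * (a * (Real.cosh (r/2) ^ 2 - 2 * (Real.cosh (r/2) ^ 2 - 1))) / (4 * Real.cosh (r/2) ^ 3))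

lemma hasDerivAt_wR (a r : ℝ) :
    HasDerivAt (fun x : ℝ => a ^ 2 - Real.cosh (x/2) ^ 2)
      (-(Real.cosh (r/2) * Real.sinh (r/2))) r := by
  have h := (((hasDerivAt_coshHalf r).pow 2)).const_sub (a ^ 2)
  refine h.congr_deriv ?_
  ring

lemma hasDerivAt_xR (a : ℝ) (r : ℝ) :
    HasDerivAt (fun x : ℝ => a / Real.cosh (x/2))
      (-(a * (Real.sinh (r/2) * (1/2))) / Real.cosh (r/2) ^ 2) r := by
  have h := (hasDerivAt_const r a).div (hasDerivAt_coshHalf r) (Real.cosh_pos (r/2)).ne'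
  refine h.congr_deriv ?_
  ring

lemma hasDerivAt_gR (a : ℝ) (P : Polynomial ℝ) {r : ℝ}
    (h : Real.cosh (r/2) < a) :
    HasDerivAt (gR a P) (gR' a P r) r := by
  have hw : (0:ℝ) < a ^ 2 - Real.cosh (r/2) ^ 2 := by nlinarith [Real.cosh_pos (r/2)]
  have h1 : HasDerivAt (fun x : ℝ => (a ^ 2 - Real.cosh (x/2) ^ 2) ^ (-(1/2) : ℝ))
      ((-(Real.cosh (r/2) * Real.sinh (r/2))) * (-(1/2))
        * (a ^ 2 - Real.cosh (r/2) ^ 2) ^ (-(1/2) - 1 : ℝ)) r :=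
    (hasDerivAt_wR a r).rpow_const (Or.inl hw.ne')
  have h2 : HasDerivAt (fun x : ℝ => P.eval (a / Real.cosh (x/2)))
      (P.derivative.eval (a / Real.cosh (r/2))
        * (-(a * (Real.sinh (r/2) * (1/2))) / Real.cosh (r/2) ^ 2)) r :=
    (P.hasDerivAt _).comp r (hasDerivAt_xR a r)
  have := h1.mul h2
  refine this.congr_deriv ?_
  rw [show (-(1/2) - 1 : ℝ) = -(3/2) by norm_num]
  unfold gR'
  ring

lemma hasDerivAt_gR' (a : ℝ) (P : Polynomial ℝ) {r : ℝ}
    (h : Real.cosh (r/2) < a) :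
    HasDerivAt (gR' a P) (gRR a P r) r := by
  have hw : (0:ℝ) < a ^ 2 - Real.cosh (r/2) ^ 2 := by nlinarith [Real.cosh_pos (r/2)]
  have hb0 : Real.cosh (r/2) ≠ 0 := (Real.cosh_pos (r/2)).ne'
  have hW3 : HasDerivAt (fun x : ℝ => (a ^ 2 - Real.cosh (x/2) ^ 2) ^ (-(3/2) : ℝ))
      ((-(Real.cosh (r/2) * Real.sinh (r/2))) * (-(3/2))
        * (a ^ 2 - Real.cosh (r/2) ^ 2) ^ (-(3/2) - 1 : ℝ)) r :=
    (hasDerivAt_wR a r).rpow_const (Or.inl hw.ne')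
  have hW1 : HasDerivAt (fun x : ℝ => (a ^ 2 - Real.cosh (x/2) ^ 2) ^ (-(1/2) : ℝ))
      ((-(Real.cosh (r/2) * Real.sinh (r/2))) * (-(1/2))
        * (a ^ 2 - Real.cosh (r/2) ^ 2) ^ (-(1/2) - 1 : ℝ)) r :=
    (hasDerivAt_wR a r).rpow_const (Or.inl hw.ne')
  have hcs : HasDerivAt (fun x : ℝ => Real.cosh (x/2) * Real.sinh (x/2))
      (Real.sinh (r/2) * (1/2) * Real.sinh (r/2)
        + Real.cosh (r/2) * (Real.cosh (r/2) * (1/2))) r :=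
    (hasDerivAt_coshHalf r).mul (hasDerivAt_sinhHalf r)
  have hP0 : HasDerivAt (fun x : ℝ => P.eval (a / Real.cosh (x/2)))
      (P.derivative.eval (a / Real.cosh (r/2))
        * (-(a * (Real.sinh (r/2) * (1/2))) / Real.cosh (r/2) ^ 2)) r :=
    (P.hasDerivAt _).comp r (hasDerivAt_xR a r)
  have hP1 : HasDerivAt (fun x : ℝ => P.derivative.eval (a / Real.cosh (x/2)))
      (P.derivative.derivative.eval (a / Real.cosh (r/2))
        * (-(a * (Real.sinh (r/2) * (1/2))) / Real.cosh (r/2) ^ 2)) r :=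
    (P.derivative.hasDerivAt _).comp r (hasDerivAt_xR a r)
  -- last factor: a * sinh(r/2) / (2 cosh(r/2)^2)
  have hlast : HasDerivAt (fun x : ℝ => a * Real.sinh (x/2) / (2 * Real.cosh (x/2) ^ 2))
      (((a * (Real.cosh (r/2) * (1/2))) * (2 * Real.cosh (r/2) ^ 2)
          - (a * Real.sinh (r/2)) * (2 * (2 * Real.cosh (r/2)) * (Real.sinh (r/2) * (1/2))))
        / (2 * Real.cosh (r/2) ^ 2) ^ 2) r := by
    have hnum : HasDerivAt (fun x : ℝ => a * Real.sinh (x/2))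
        (a * (Real.cosh (r/2) * (1/2))) r := (hasDerivAt_sinhHalf r).const_mul a
    have hden : HasDerivAt (fun x : ℝ => 2 * Real.cosh (x/2) ^ 2)
        (2 * (2 * Real.cosh (r/2)) * (Real.sinh (r/2) * (1/2))) r := by
      have := ((hasDerivAt_coshHalf r).pow 2).const_mul (2:ℝ)
      refine this.congr_deriv ?_
      ring
    have hden0 : 2 * Real.cosh (r/2) ^ 2 ≠ 0 := by positivity
    exact hnum.div hden hden0
  have hmain :=
    ((((hW3.const_mul ((1/2) : ℝ)).mul hcs).mul hP0).sub
      ((hW1.mul hP1).mul hlast))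
  refine hmain.congr_deriv ?_
  simp only [Pi.mul_apply]
  rw [show (-(3/2) - 1 : ℝ) = -(5/2) by norm_num,
    show (-(1/2) - 1 : ℝ) = -(3/2) by norm_num]
  unfold gRR
  rw [← Real.sinh_sq (r/2)]
  field_simp
  ring



lemma final_alg (A B Q c p0 p1 p2 N W : ℝ) (hB : B ≠ 0) (hQ : Q ≠ 0)
    (hode : (1 - (A/B)^2) * p2 - (A/B) * p1 + N^2 * p0 = 0) :
    c * ((3/4) * W * (A^2*(A^2-1)) * p0
      - (1/4) * (W*(A^2-B^2)) * (A^2+(A^2-1)) * p0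
      - (1/2) * (W*(A^2-B^2)) * (A*(A^2-1)) * p1 / B
      + (W*(A^2-B^2)^2) * (p2*(A^2-1)/(4*B^2) + p1*A/(4*B)))
    = c * ((3/4) * W * (B^2*(B^2-1)) * p0
      + (1/4) * (W*(A^2-B^2)) * (B^2+(B^2-1)) * p0
      - (1/2) * (W*(A^2-B^2)) * (A*(B^2-1)) * p1 / B
      + (W*(A^2-B^2)^2) * (p2*(A^2*(B^2-1))/(4*B^4) - p1*(A*(B^2-2*(B^2-1)))/(4*B^3)))
    + ((2*B^2-1)/(2*Q*B)) * (c * ((1/2)*(W*(A^2-B^2))*(B*Q)*p0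
        - (W*(A^2-B^2)^2)*p1*(A*Q/(2*B^2))))
    + ((N^2/4)/B^2) * (c * (W*(A^2-B^2)^2) * p0)
    + (1/4) * (c * (W*(A^2-B^2)^2) * p0) := by
  linear_combination (norm := (field_simp; ring))
    (-(c*W*(A^2-B^2)^2/(4*B^2))) * hode

set_option maxHeartbeats 2000000 in
/-- Theorem 2.3. For `k ∈ ℝ` with `n = 2|k| ∈ ℕ`, the function
`v(t,r) = (1/(2π)) (cosh²(t/2) − cosh²(r/2))^{-1/2} T_n(cosh(t/2)/cosh(r/2))`
satisfies the radial wave equation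
`∂²v/∂t² = ∂²v/∂r² + coth r · ∂v/∂r + (k²/cosh²(r/2)) v + (1/4) v`
on the region `{(t,r) : 0 < r < t}`. -/
theorem stmt4 (k : ℝ) (n : ℕ) (hk : 2 * |k| = (n : ℝ))
    (v : ℝ → ℝ → ℝ)
    (hv : ∀ t r, v t r =
      (1 / (2 * Real.pi)) * (Real.cosh (t / 2) ^ 2 - Real.cosh (r / 2) ^ 2) ^ (-(1 / 2 : ℝ))
        * (Polynomial.Chebyshev.T ℝ (n : ℤ)).eval (Real.cosh (t / 2) / Real.cosh (r / 2)))
    (t r : ℝ) (hr : 0 < r) (hrt : r < t) :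
    deriv (fun t' => deriv (fun t'' => v t'' r) t') t
    = deriv (fun r' => deriv (fun r'' => v t r'') r') r
        + (Real.cosh r / Real.sinh r) * deriv (fun r' => v t r') r
        + (k ^ 2 / Real.cosh (r / 2) ^ 2) * v t r
        + (1 / 4) * v t r := by
  set P : Polynomial ℝ := Polynomial.Chebyshev.T ℝ (n : ℤ) with hPdef
  have ht0 : 0 < t := lt_trans hr hrt
  have hb0 : (0:ℝ) < Real.cosh (r/2) := Real.cosh_pos _
  have hb1 : (1:ℝ) < Real.cosh (r/2) := Real.one_lt_cosh.mpr (by positivity)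
  have hba : Real.cosh (r/2) < Real.cosh (t/2) := by
    rw [Real.cosh_lt_cosh, abs_of_pos (by linarith), abs_of_pos (by linarith)]
    linarith
  have hq0 : (0:ℝ) < Real.sinh (r/2) := Real.sinh_pos_iff.mpr (by linarith)
  have hw : (0:ℝ) < Real.cosh (t/2) ^ 2 - Real.cosh (r/2) ^ 2 := by nlinarith
  -- LHS
  have hfun1 : (fun t'' => v t'' r)
      = (fun t'' => 1 / (2 * Real.pi) * gT (Real.cosh (r/2)) P t'') := by
    funext x
    rw [hv x r]
    unfold gT
    ring
  rw [hfun1]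
  have hU : (fun t' => deriv (fun t'' => 1 / (2 * Real.pi) * gT (Real.cosh (r/2)) P t'') t')
      =ᶠ[nhds t] (fun t' => 1 / (2 * Real.pi) * gT' (Real.cosh (r/2)) P t') := by
    have hUopen : IsOpen {t' : ℝ | Real.cosh (r/2) < Real.cosh (t'/2)} :=
      isOpen_lt continuous_const (Real.continuous_cosh.comp (continuous_id.div_const 2))
    filter_upwards [hUopen.mem_nhds hba] with t' ht'
    exact ((hasDerivAt_gT _ hb0 _ ht').const_mul _).deriv
  rw [hU.deriv_eq]
  rw [((hasDerivAt_gT' _ hb0 P hba).const_mul (1 / (2 * Real.pi))).deriv]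
  -- RHS second derivative
  have hfun2 : (fun r'' => v t r'')
      = (fun r'' => 1 / (2 * Real.pi) * gR (Real.cosh (t/2)) P r'') := by
    funext x
    rw [hv t x]
    unfold gR
    ring
  rw [hfun2]
  have hV : (fun r' => deriv (fun r'' => 1 / (2 * Real.pi) * gR (Real.cosh (t/2)) P r'') r')
      =ᶠ[nhds r] (fun r' => 1 / (2 * Real.pi) * gR' (Real.cosh (t/2)) P r') := by
    have hVopen : IsOpen {r' : ℝ | Real.cosh (r'/2) < Real.cosh (t/2)} :=
      isOpen_lt (Real.continuous_cosh.comp (continuous_id.div_const 2)) continuous_const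
    filter_upwards [hVopen.mem_nhds hba] with r' hr'
    exact ((hasDerivAt_gR _ P hr').const_mul _).deriv
  rw [hV.deriv_eq]
  rw [((hasDerivAt_gR' (Real.cosh (t/2)) P hba).const_mul (1 / (2 * Real.pi))).deriv]
  rw [((hasDerivAt_gR (Real.cosh (t/2)) P hba).const_mul (1 / (2 * Real.pi))).deriv]
  rw [hv t r]
  -- algebraic facts
  have hk2 : k ^ 2 = (n:ℝ) ^ 2 / 4 := by
    have habs : |k| = (n:ℝ)/2 := by linarith
    calc k ^ 2 = |k| ^ 2 := (sq_abs k).symm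
      _ = ((n:ℝ)/2) ^ 2 := by rw [habs]
      _ = (n:ℝ)^2/4 := by ring
  have hcr : Real.cosh r = 2 * Real.cosh (r/2) ^ 2 - 1 := by
    have h1 := Real.cosh_two_mul (r/2)
    have h2 := Real.sinh_sq (r/2)
    rw [show 2*(r/2) = r by ring] at h1
    linarith
  have hsr : Real.sinh r = 2 * Real.sinh (r/2) * Real.cosh (r/2) := by
    have h1 := Real.sinh_two_mul (r/2)
    rw [show 2*(r/2) = r by ring] at h1
    exact h1
  have hode := cheb_ode (n : ℤ) (Real.cosh (t/2) / Real.cosh (r/2))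
  push_cast at hode
  rw [← hPdef] at hode
  have hx1 : (1:ℝ) - (Real.cosh (t/2) / Real.cosh (r/2)) ^ 2 ≠ 0 := by
    have : (1:ℝ) < Real.cosh (t/2) / Real.cosh (r/2) := (one_lt_div hb0).mpr hba
    nlinarith
  -- rpow splitting
  have e3 : (Real.cosh (t/2) ^ 2 - Real.cosh (r/2) ^ 2) ^ (-(3/2) : ℝ)
      = (Real.cosh (t/2) ^ 2 - Real.cosh (r/2) ^ 2) ^ (-(5/2) : ℝ)
        * (Real.cosh (t/2) ^ 2 - Real.cosh (r/2) ^ 2) := by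
    have h := Real.rpow_add hw (-(5/2)) 1
    rw [Real.rpow_one] at h
    rw [show (-(3/2) : ℝ) = -(5/2) + 1 by norm_num, h]
  have e1 : (Real.cosh (t/2) ^ 2 - Real.cosh (r/2) ^ 2) ^ (-(1/2) : ℝ)
      = (Real.cosh (t/2) ^ 2 - Real.cosh (r/2) ^ 2) ^ (-(5/2) : ℝ)
        * (Real.cosh (t/2) ^ 2 - Real.cosh (r/2) ^ 2) ^ 2 := by
    have h := Real.rpow_add hw (-(5/2)) 2
    have h2 : (Real.cosh (t/2) ^ 2 - Real.cosh (r/2) ^ 2) ^ (2:ℝ)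
        = (Real.cosh (t/2) ^ 2 - Real.cosh (r/2) ^ 2) ^ (2:ℕ) := by
      rw [← Real.rpow_natCast (Real.cosh (t/2) ^ 2 - Real.cosh (r/2) ^ 2) 2]
      norm_num
    rw [h2] at h
    rw [show (-(1/2) : ℝ) = -(5/2) + 2 by norm_num, h]
  unfold gTT gRR gR'
  rw [hk2, hcr, hsr, e3, e1]
  linear_combination (norm := (field_simp [hb0.ne', hq0.ne', Real.pi_ne_zero]; ring))
    final_alg (Real.cosh (t/2)) (Real.cosh (r/2)) (Real.sinh (r/2)) (1/(2*Real.pi))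
      (P.eval (Real.cosh (t/2) / Real.cosh (r/2)))
      (P.derivative.eval (Real.cosh (t/2) / Real.cosh (r/2)))
      (P.derivative.derivative.eval (Real.cosh (t/2) / Real.cosh (r/2)))
      (n:ℝ) ((Real.cosh (t/2) ^ 2 - Real.cosh (r/2) ^ 2) ^ (-(5/2) : ℝ))
      hb0.ne' hq0.ne' hode
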